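/- Let G₁=(V₁,E₁) and G₂=(V₂,E₂) be vertex-disjoint finite simple graphs with V₁ and V₂ both nonempty. Then the connected neighborhood polynomial of their join satisfies N^{(c)}(G₁ + G₂, x) = 1 + S(G₁,x) + S(G₂,x) + (N(G₁,x) − 1)·((1+x)^{|V₂|} − 1) + (N(G₂,x) − 1)·((1+x)^{|V₁|} − 1) − (N(G₁,x) − 1)·(N(G₂,x) − 1), where the leading 1 accounts for the empty set. -/

import Mathlib

open Finset Polynomial

open scoped Classical in
/-- The neighborhood complex of `G`: all finite vertex subsets contained in the open
neighborhood of some vertex. -/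
noncomputable def nhdComplex {V : Type*} [Fintype V] (G : SimpleGraph V) : Finset (Finset V) :=
  Finset.univ.filter (fun A => ∃ v : V, (A : Set V) ⊆ G.neighborSet v)

/-- The neighborhood polynomial of `G`. -/
noncomputable def nbhdPoly {V : Type*} [Fintype V] (G : SimpleGraph V) : Polynomial ℤ :=
  ∑ A ∈ nhdComplex G, X ^ A.card

open scoped Classical in
/-- The connected neighborhood polynomial of `G`: the generating function of the members
of the neighborhood complex inducing a connected subgraph (empty set included). -/
noncomputable def connNbhdPoly {V : Type*} [Fintype V] (G : SimpleGraph V) : Polynomial ℤ :=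
  ∑ A ∈ (nhdComplex G).filter
      (fun (A : Finset V) => A = ∅ ∨ (G.induce (A : Set V)).Connected), X ^ A.card

open scoped Classical in
/-- The subgraph polynomial of `G`: the generating function of the nonempty vertex
subsets of `G` inducing a connected subgraph. -/
noncomputable def subgraphPoly {V : Type*} [Fintype V] (G : SimpleGraph V) : Polynomial ℤ :=
  ∑ A ∈ Finset.univ.filter
      (fun (A : Finset V) => A ≠ ∅ ∧ (G.induce (A : Set V)).Connected), X ^ A.card

/-- The join of two vertex-disjoint graphs: their disjoint union together with all
edges joining vertices of the first to vertices of the second. -/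
def SimpleGraph.graphJoin {V₁ V₂ : Type*} (G₁ : SimpleGraph V₁) (G₂ : SimpleGraph V₂) :
    SimpleGraph (V₁ ⊕ V₂) :=
  (G₁ ⊕g G₂) ⊔ completeBipartiteGraph V₁ V₂

open scoped Classical

/-!
Write a vertex set of the join as `s ⊔ t` with `s ⊆ V₁` and `t ⊆ V₂`. If `t = ∅`, the set lies
in the neighborhood of any vertex of `V₂` and induces `G₁[s]`, so these sets contribute
`1 + S(G₁)`; symmetrically, the nonempty `t` with `s = ∅` contribute `S(G₂)`. If both parts are
nonempty, `s ⊔ t` is connected through the bipartite edges, and since a vertex of `V₁` sees all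
of `V₂`, it lies in a neighborhood iff `s ∈ 𝒩(G₁)` or `t ∈ 𝒩(G₂)`. Inclusion–exclusion over
these two conditions, with `∑_{∅ ≠ t ⊆ V₂} x^|t| = (1 + x)^|V₂| - 1`, yields the remaining
three terms.
-/

section Join

variable {α β V V₁ V₂ : Type*}

namespace SimpleGraph

lemma Embedding.connected_induce_image_iff {W : Type*} {G : SimpleGraph V} {H : SimpleGraph W}
    (f : G ↪g H) (s : Set V) : (H.induce (f '' s)).Connected ↔ (G.induce s).Connected :=
  (Iso.connected_iff ⟨Equiv.Set.image f s f.injective, by simp⟩).symm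

variable (G₁ : SimpleGraph V₁) (G₂ : SimpleGraph V₂)

@[simp] lemma graphJoin_adj_inl_inl {a b : V₁} :
    (G₁.graphJoin G₂).Adj (.inl a) (.inl b) ↔ G₁.Adj a b := by
  simp [graphJoin]

@[simp] lemma graphJoin_adj_inr_inr {a b : V₂} :
    (G₁.graphJoin G₂).Adj (.inr a) (.inr b) ↔ G₂.Adj a b := by
  simp [graphJoin]

@[simp] lemma graphJoin_adj_inl_inr (a : V₁) (b : V₂) :
    (G₁.graphJoin G₂).Adj (.inl a) (.inr b) := by
  simp [graphJoin]

@[simp] lemma graphJoin_adj_inr_inl (a : V₁) (b : V₂) :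
    (G₁.graphJoin G₂).Adj (.inr b) (.inl a) := by
  simp [graphJoin]

def Embedding.graphJoinInl : G₁ ↪g G₁.graphJoin G₂ :=
  { Function.Embedding.inl with map_rel_iff' := by simp }

def Embedding.graphJoinInr : G₂ ↪g G₁.graphJoin G₂ :=
  { Function.Embedding.inr with map_rel_iff' := by simp }

lemma graphJoin_induce_disjSum_empty_connected_iff (s : Finset V₁) :
    ((G₁.graphJoin G₂).induce (s.disjSum (∅ : Finset V₂) : Set (V₁ ⊕ V₂))).Connected ↔
      (G₁.induce (s : Set V₁)).Connected := by
  rw [disjSum_empty, coe_map]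
  exact (Embedding.graphJoinInl G₁ G₂).connected_induce_image_iff _

lemma graphJoin_induce_empty_disjSum_connected_iff (t : Finset V₂) :
    ((G₁.graphJoin G₂).induce ((∅ : Finset V₁).disjSum t : Set (V₁ ⊕ V₂))).Connected ↔
      (G₂.induce (t : Set V₂)).Connected := by
  rw [empty_disjSum, coe_map]
  exact (Embedding.graphJoinInr G₁ G₂).connected_induce_image_iff _

lemma graphJoin_induce_disjSum_connected {s : Finset V₁} {t : Finset V₂}
    (hs : s.Nonempty) (ht : t.Nonempty) :
    ((G₁.graphJoin G₂).induce (s.disjSum t : Set (V₁ ⊕ V₂))).Connected := by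
  obtain ⟨a, ha⟩ := hs
  obtain ⟨b, hb⟩ := ht
  set H := (G₁.graphJoin G₂).induce (s.disjSum t : Set (V₁ ⊕ V₂))
  let a' : (s.disjSum t : Set (V₁ ⊕ V₂)) := ⟨.inl a, by simpa⟩
  let b' : (s.disjSum t : Set (V₁ ⊕ V₂)) := ⟨.inr b, by simpa⟩
  have hab : H.Adj a' b' := by simp [H, a', b']
  refine (connected_iff_exists_forall_reachable H).2 ⟨a', ?_⟩
  rintro ⟨x | x, hx⟩
  · exact hab.reachable.trans (show H.Adj b' _ by simp [H, b']).reachable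
  · exact (show H.Adj a' _ by simp [H, a']).reachable

end SimpleGraph

open SimpleGraph

section Complex

variable [Fintype V₁] [Fintype V₂] (G₁ : SimpleGraph V₁) (G₂ : SimpleGraph V₂)

lemma empty_mem_nhdComplex [Fintype V] [Nonempty V] (G : SimpleGraph V) :
    ∅ ∈ nhdComplex G := by
  simp [nhdComplex]

lemma disjSum_mem_nhdComplex_graphJoin (s : Finset V₁) (t : Finset V₂) :
    s.disjSum t ∈ nhdComplex (G₁.graphJoin G₂) ↔ s ∈ nhdComplex G₁ ∨ t ∈ nhdComplex G₂ := by
  simp [nhdComplex, Set.subset_def, Sum.exists, Sum.forall]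

noncomputable def connNbhdComplex [Fintype V] (G : SimpleGraph V) : Finset (Finset V) :=
  (nhdComplex G).filter (fun A => A = ∅ ∨ (G.induce (A : Set V)).Connected)

lemma disjSum_empty_mem_connNbhdComplex_graphJoin [Nonempty V₂] (s : Finset V₁) :
    s.disjSum ∅ ∈ connNbhdComplex (G₁.graphJoin G₂) ↔
      s = ∅ ∨ (G₁.induce (s : Set V₁)).Connected := by
  simp only [connNbhdComplex, mem_filter, disjSum_mem_nhdComplex_graphJoin,
    empty_mem_nhdComplex, or_true, true_and, disjSum_eq_empty, and_true,
    graphJoin_induce_disjSum_empty_connected_iff]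

lemma empty_disjSum_mem_connNbhdComplex_graphJoin [Nonempty V₁] (t : Finset V₂) :
    (∅ : Finset V₁).disjSum t ∈ connNbhdComplex (G₁.graphJoin G₂) ↔
      t = ∅ ∨ (G₂.induce (t : Set V₂)).Connected := by
  simp only [connNbhdComplex, mem_filter, disjSum_mem_nhdComplex_graphJoin,
    empty_mem_nhdComplex, true_or, true_and, disjSum_eq_empty,
    graphJoin_induce_empty_disjSum_connected_iff]

lemma disjSum_mem_connNbhdComplex_graphJoin {s : Finset V₁} {t : Finset V₂}
    (hs : s.Nonempty) (ht : t.Nonempty) :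
    s.disjSum t ∈ connNbhdComplex (G₁.graphJoin G₂) ↔
      s ∈ nhdComplex G₁ ∨ t ∈ nhdComplex G₂ := by
  simp [connNbhdComplex, disjSum_mem_nhdComplex_graphJoin,
    graphJoin_induce_disjSum_connected G₁ G₂ hs ht]

end Complex

lemma sum_sum_eq_add_sum_erase_empty {M : Type*} [AddCommMonoid M] [Fintype α] [Fintype β]
    (f : Finset α → Finset β → M) :
    ∑ s, ∑ t, f s t = f ∅ ∅ + ∑ s ∈ univ.erase ∅, f s ∅ + ∑ t ∈ univ.erase ∅, f ∅ t +
      ∑ s ∈ univ.erase ∅, ∑ t ∈ univ.erase ∅, f s t := by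
  simp only [← add_sum_erase univ _ (mem_univ ∅), sum_add_distrib]
  abel

lemma sum_sum_ite_or_mul {ι κ R : Type*} [CommRing R] (S : Finset ι) (T : Finset κ)
    (p : ι → Prop) (q : κ → Prop) [DecidablePred p] [DecidablePred q] (a : ι → R) (b : κ → R) :
    ∑ i ∈ S, ∑ j ∈ T, (if p i ∨ q j then a i * b j else 0) =
      (∑ i ∈ S, if p i then a i else 0) * ∑ j ∈ T, b j
        + (∑ i ∈ S, a i) * ∑ j ∈ T, (if q j then b j else 0)
        - (∑ i ∈ S, if p i then a i else 0) * ∑ j ∈ T, (if q j then b j else 0) := by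
  simp only [sum_mul_sum, ← sum_add_distrib, ← sum_sub_distrib]
  refine sum_congr rfl fun i _ => sum_congr rfl fun j _ => ?_
  by_cases hp : p i <;> by_cases hq : q j <;> simp [hp, hq]

lemma one_add_pow_card_sub_one_eq_sum {R : Type*} [CommRing R] (α : Type*) [Fintype α] (x : R) :
    (1 + x) ^ Fintype.card α - 1 = ∑ s ∈ univ.erase (∅ : Finset α), x ^ #s := by
  rw [sub_eq_iff_eq_add', add_comm 1 x, ← Fintype.sum_pow_mul_eq_add_pow,
    ← add_sum_erase _ _ (mem_univ ∅)]
  simp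

lemma connNbhdPoly_eq_sum_sum_disjSum [Fintype α] [Fintype β] (G : SimpleGraph (α ⊕ β)) :
    connNbhdPoly G = ∑ s : Finset α, ∑ t : Finset β,
      if s.disjSum t ∈ connNbhdComplex G then X ^ #s * X ^ #t else 0 := by
  change ∑ A ∈ connNbhdComplex G, X ^ #A = _
  rw [← Fintype.sum_ite_mem, ← sumEquiv.symm.toEquiv.sum_comp, Fintype.sum_prod_type]
  simp only [OrderIso.toEquiv_symm, OrderIso.coe_symm_toEquiv, sumEquiv_symm_apply, card_disjSum,
    pow_add]

lemma nbhdPoly_sub_one_eq_sum [Fintype V] [Nonempty V] (G : SimpleGraph V) :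
    nbhdPoly G - 1 = ∑ s ∈ univ.erase ∅, if s ∈ nhdComplex G then X ^ #s else 0 := by
  rw [sub_eq_iff_eq_add', nbhdPoly, ← Fintype.sum_ite_mem, ← add_sum_erase _ _ (mem_univ ∅)]
  simp [empty_mem_nhdComplex]

lemma subgraphPoly_eq_sum_erase_empty [Fintype V] (G : SimpleGraph V) :
    subgraphPoly G =
      ∑ s ∈ univ.erase (∅ : Finset V), if (G.induce (s : Set V)).Connected then X ^ #s else 0 := by
  rw [subgraphPoly, ← sum_filter]
  congr 1
  ext s
  simp [and_comm]

lemma connNbhdPoly_graphJoin_eq_add_sum [Fintype V₁] [Fintype V₂] [Nonempty V₁] [Nonempty V₂]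
    (G₁ : SimpleGraph V₁) (G₂ : SimpleGraph V₂) :
    connNbhdPoly (G₁.graphJoin G₂) = 1 + subgraphPoly G₁ + subgraphPoly G₂ +
      ∑ s ∈ univ.erase (∅ : Finset V₁), ∑ t ∈ univ.erase (∅ : Finset V₂),
        if s ∈ nhdComplex G₁ ∨ t ∈ nhdComplex G₂ then X ^ #s * X ^ #t else 0 := by
  rw [connNbhdPoly_eq_sum_sum_disjSum, sum_sum_eq_add_sum_erase_empty,
    subgraphPoly_eq_sum_erase_empty, subgraphPoly_eq_sum_erase_empty]
  congr 1; congr 1; congr 1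
  · simp only [disjSum_empty_mem_connNbhdComplex_graphJoin, true_or, if_true, card_empty,
      pow_zero, mul_one]
  · refine sum_congr rfl fun s hs => ?_
    simp only [disjSum_empty_mem_connNbhdComplex_graphJoin, ne_of_mem_erase hs, false_or,
      card_empty, pow_zero, mul_one]
  · refine sum_congr rfl fun t ht => ?_
    simp only [empty_disjSum_mem_connNbhdComplex_graphJoin, ne_of_mem_erase ht, false_or,
      card_empty, pow_zero, one_mul]
  · refine sum_congr rfl fun s hs => sum_congr rfl fun t ht => if_congr ?_ rfl rfl
    exact disjSum_mem_connNbhdComplex_graphJoin G₁ G₂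
      (nonempty_of_ne_empty (ne_of_mem_erase hs)) (nonempty_of_ne_empty (ne_of_mem_erase ht))

end Join

/-- The connected neighborhood polynomial of the join of two nonempty graphs. -/
theorem connNbhdPoly_join {V₁ V₂ : Type*} [Fintype V₁] [Fintype V₂]
    [Nonempty V₁] [Nonempty V₂] (G₁ : SimpleGraph V₁) (G₂ : SimpleGraph V₂) :
    connNbhdPoly (G₁.graphJoin G₂) =
      1 + subgraphPoly G₁ + subgraphPoly G₂
        + (nbhdPoly G₁ - 1) * ((1 + X) ^ Fintype.card V₂ - 1)
        + (nbhdPoly G₂ - 1) * ((1 + X) ^ Fintype.card V₁ - 1)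
        - (nbhdPoly G₁ - 1) * (nbhdPoly G₂ - 1) := by
  rw [connNbhdPoly_graphJoin_eq_add_sum, sum_sum_ite_or_mul, nbhdPoly_sub_one_eq_sum,
    nbhdPoly_sub_one_eq_sum, one_add_pow_card_sub_one_eq_sum, one_add_pow_card_sub_one_eq_sum]
  ring
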